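/- arXiv:0906.0744 — 8 statements merged into one kernel-verified Lean document; each statement's English description precedes it below -/
import Mathlib

section
/- The set ⋃_{P feasible} ( C₁(P) ∩ C₂(P) ) ⊆ ℝ², i.e. the union over all feasible power policies of the intersection of the two receivers' MAC rate regions (the capacity region of the ergodic fading compound MAC), is a convex subset of ℝ². -/
open MeasureTheory

/-- A power policy `P = (P₁, P₂)` is feasible for average power constraints
`P̄₁, P̄₂` if its components are measurable, nonnegative, integrable, and satisfy
`∫ Pₖ dμ ≤ P̄ₖ` for `k = 1, 2`. -/
def Feasible {Ω : Type*} [MeasurableSpace Ω] (μ : Measure Ω) (Pb1 Pb2 : ℝ)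
    (P : (Ω → ℝ) × (Ω → ℝ)) : Prop :=
  Measurable P.1 ∧ Measurable P.2 ∧ (∀ ω, 0 ≤ P.1 ω) ∧ (∀ ω, 0 ≤ P.2 ω) ∧
    Integrable P.1 μ ∧ Integrable P.2 μ ∧
    ∫ ω, P.1 ω ∂μ ≤ Pb1 ∧ ∫ ω, P.2 ω ∂μ ≤ Pb2

/-- The fading-averaged MAC rate region at a receiver with (squared) fading gains
`ga` from transmitter 1 and `gb` from transmitter 2, under power policy `(P₁, P₂)`:
`{(R₁,R₂) ∈ [0,∞)² : R₁ ≤ ∫ C(ga·P₁), R₂ ≤ ∫ C(gb·P₂), R₁+R₂ ≤ ∫ C(ga·P₁+gb·P₂)}`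
with `C(x) = log(1+x)`. -/
def macRegion {Ω : Type*} [MeasurableSpace Ω] (μ : Measure Ω)
    (ga gb P1 P2 : Ω → ℝ) : Set (ℝ × ℝ) :=
  {R | 0 ≤ R.1 ∧ 0 ≤ R.2 ∧
    R.1 ≤ ∫ ω, Real.log (1 + ga ω * P1 ω) ∂μ ∧
    R.2 ≤ ∫ ω, Real.log (1 + gb ω * P2 ω) ∂μ ∧
    R.1 + R.2 ≤ ∫ ω, Real.log (1 + ga ω * P1 ω + gb ω * P2 ω) ∂μ}

/-- Concavity of `log`: convex combination inequality. -/
lemma log_combo {a b x y : ℝ} (ha : 0 ≤ a) (hb : 0 ≤ b) (hab : a + b = 1)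
    (hx : 0 < x) (hy : 0 < y) :
    a * Real.log x + b * Real.log y ≤ Real.log (a * x + b * y) := by
  have := strictConcaveOn_log_Ioi.concaveOn.2 (Set.mem_Ioi.2 hx) (Set.mem_Ioi.2 hy) ha hb hab
  simpa [smul_eq_mul] using this

/-- Integrability of `log ∘ f` from domination `1 ≤ f ≤ h` with `log ∘ h` integrable. -/
lemma integrable_log_of_le {Ω : Type*} [MeasurableSpace Ω] {μ : Measure Ω}
    {f h : Ω → ℝ} (hf : Measurable f) (h1 : ∀ ω, 1 ≤ f ω) (hfh : ∀ ω, f ω ≤ h ω)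
    (hih : Integrable (fun ω => Real.log (h ω)) μ) :
    Integrable (fun ω => Real.log (f ω)) μ := by
  have hm : Measurable fun ω => Real.log (f ω) := Real.measurable_log.comp hf
  apply hih.mono' hm.aestronglyMeasurable
  filter_upwards with ω
  rw [Real.norm_eq_abs, abs_of_nonneg (Real.log_nonneg (h1 ω))]
  exact Real.log_le_log (lt_of_lt_of_le zero_lt_one (h1 ω)) (hfh ω)

/-- Integral of convex combination is bounded by integral of pointwise-larger function. -/
lemma combo_integral_le {Ω : Type*} [MeasurableSpace Ω] {μ : Measure Ω}
    {f g h : Ω → ℝ} {a b : ℝ}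
    (hf : Integrable f μ) (hg : Integrable g μ) (hh : Integrable h μ)
    (hpt : ∀ ω, a * f ω + b * g ω ≤ h ω) :
    a * ∫ ω, f ω ∂μ + b * ∫ ω, g ω ∂μ ≤ ∫ ω, h ω ∂μ := by
  have := integral_mono ((hf.const_mul a).add (hg.const_mul b)) hh hpt
  simpa [integral_add (hf.const_mul a) (hg.const_mul b), integral_const_mul] using this

set_option maxHeartbeats 1000000 in
/-- The capacity region of the ergodic fading compound MAC, i.e. the
union over all feasible power policies of the intersection of the two receivers'
MAC rate regions, is a convex subset of `ℝ²`. -/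
theorem stmt2 {Ω : Type*} [MeasurableSpace Ω] (μ : Measure Ω) [IsProbabilityMeasure μ]
    (g11 g12 g21 g22 : Ω → ℝ)
    (hm11 : Measurable g11) (hm12 : Measurable g12)
    (hm21 : Measurable g21) (hm22 : Measurable g22)
    (hn11 : ∀ ω, 0 ≤ g11 ω) (hn12 : ∀ ω, 0 ≤ g12 ω)
    (hn21 : ∀ ω, 0 ≤ g21 ω) (hn22 : ∀ ω, 0 ≤ g22 ω)
    (Pb1 Pb2 : ℝ) (hPb1 : 0 < Pb1) (hPb2 : 0 < Pb2)
    (hint : ∀ P : (Ω → ℝ) × (Ω → ℝ), Feasible μ Pb1 Pb2 P →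
      Integrable (fun ω => Real.log (1 + g11 ω * P.1 ω + g12 ω * P.2 ω)) μ ∧
      Integrable (fun ω => Real.log (1 + g21 ω * P.1 ω + g22 ω * P.2 ω)) μ) :
    Convex ℝ (⋃ P ∈ {P : (Ω → ℝ) × (Ω → ℝ) | Feasible μ Pb1 Pb2 P},
      macRegion μ g11 g12 P.1 P.2 ∩ macRegion μ g21 g22 P.1 P.2) := by
  rintro x hx y hy a b ha hb hab
  simp only [Set.mem_iUnion, Set.mem_setOf_eq] at hx hy ⊢
  obtain ⟨P, hP, hxP1, hxP2⟩ := hx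
  obtain ⟨Q, hQ, hyQ1, hyQ2⟩ := hy
  obtain ⟨hPm1, hPm2, hPn1, hPn2, hPi1, hPi2, hPb1', hPb2'⟩ := hP
  obtain ⟨hQm1, hQm2, hQn1, hQn2, hQi1, hQi2, hQb1', hQb2'⟩ := hQ
  set N : (Ω → ℝ) × (Ω → ℝ) :=
    (fun ω => a * P.1 ω + b * Q.1 ω, fun ω => a * P.2 ω + b * Q.2 ω) with hN
  have hNfeas : Feasible μ Pb1 Pb2 N := by
    refine ⟨(hPm1.const_mul a).add (hQm1.const_mul b),
      (hPm2.const_mul a).add (hQm2.const_mul b),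
      fun ω => add_nonneg (mul_nonneg ha (hPn1 ω)) (mul_nonneg hb (hQn1 ω)),
      fun ω => add_nonneg (mul_nonneg ha (hPn2 ω)) (mul_nonneg hb (hQn2 ω)),
      (hPi1.const_mul a).add (hQi1.const_mul b),
      (hPi2.const_mul a).add (hQi2.const_mul b), ?_, ?_⟩
    · rw [integral_add (hPi1.const_mul a) (hQi1.const_mul b), integral_const_mul, integral_const_mul]
      nlinarith [integral_nonneg (μ := μ) (f := P.1) hPn1, integral_nonneg (μ := μ) (f := Q.1) hQn1]
    · rw [integral_add (hPi2.const_mul a) (hQi2.const_mul b), integral_const_mul, integral_const_mul]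
      nlinarith [integral_nonneg (μ := μ) (f := P.2) hPn2, integral_nonneg (μ := μ) (f := Q.2) hQn2]
  refine ⟨N, hNfeas, ?_, ?_⟩
  -- integrabilities
  · obtain ⟨hPint, -⟩ := hint P ⟨hPm1, hPm2, hPn1, hPn2, hPi1, hPi2, hPb1', hPb2'⟩
    obtain ⟨hQint, -⟩ := hint Q ⟨hQm1, hQm2, hQn1, hQn2, hQi1, hQi2, hQb1', hQb2'⟩
    obtain ⟨hNint, -⟩ := hint N hNfeas
    have hP1i : Integrable (fun ω => Real.log (1 + g11 ω * P.1 ω)) μ :=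
      integrable_log_of_le (by fun_prop) (fun ω => by nlinarith [hn11 ω, hPn1 ω])
        (fun ω => by nlinarith [hn12 ω, hPn2 ω]) hPint
    have hP2i : Integrable (fun ω => Real.log (1 + g12 ω * P.2 ω)) μ :=
      integrable_log_of_le (by fun_prop) (fun ω => by nlinarith [hn12 ω, hPn2 ω])
        (fun ω => by nlinarith [hn11 ω, hPn1 ω]) hPint
    have hQ1i : Integrable (fun ω => Real.log (1 + g11 ω * Q.1 ω)) μ :=
      integrable_log_of_le (by fun_prop) (fun ω => by nlinarith [hn11 ω, hQn1 ω])
        (fun ω => by nlinarith [hn12 ω, hQn2 ω]) hQint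
    have hQ2i : Integrable (fun ω => Real.log (1 + g12 ω * Q.2 ω)) μ :=
      integrable_log_of_le (by fun_prop) (fun ω => by nlinarith [hn12 ω, hQn2 ω])
        (fun ω => by nlinarith [hn11 ω, hQn1 ω]) hQint
    have hN1i : Integrable (fun ω => Real.log (1 + g11 ω * N.1 ω)) μ :=
      integrable_log_of_le (by simp only [hN]; fun_prop)
        (fun ω => by
          simp only [hN]
          nlinarith [mul_nonneg (hn11 ω)
            (add_nonneg (mul_nonneg ha (hPn1 ω)) (mul_nonneg hb (hQn1 ω)))])
        (fun ω => by
          simp only [hN]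
          nlinarith [mul_nonneg (hn12 ω)
            (add_nonneg (mul_nonneg ha (hPn2 ω)) (mul_nonneg hb (hQn2 ω)))]) hNint
    have hN2i : Integrable (fun ω => Real.log (1 + g12 ω * N.2 ω)) μ :=
      integrable_log_of_le (by simp only [hN]; fun_prop)
        (fun ω => by
          simp only [hN]
          nlinarith [mul_nonneg (hn12 ω)
            (add_nonneg (mul_nonneg ha (hPn2 ω)) (mul_nonneg hb (hQn2 ω)))])
        (fun ω => by
          simp only [hN]
          nlinarith [mul_nonneg (hn11 ω)
            (add_nonneg (mul_nonneg ha (hPn1 ω)) (mul_nonneg hb (hQn1 ω)))]) hNint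
    obtain ⟨hx0, hx0', hx1, hx2, hx12⟩ := hxP1
    obtain ⟨hy0, hy0', hy1, hy2, hy12⟩ := hyQ1
    simp only [macRegion, Set.mem_setOf_eq, Prod.fst_add, Prod.snd_add, Prod.smul_fst,
      Prod.smul_snd, smul_eq_mul]
    refine ⟨add_nonneg (mul_nonneg ha hx0) (mul_nonneg hb hy0),
      add_nonneg (mul_nonneg ha hx0') (mul_nonneg hb hy0'), ?_, ?_, ?_⟩
    · calc a * x.1 + b * y.1 ≤ a * (∫ ω, Real.log (1 + g11 ω * P.1 ω) ∂μ)
            + b * (∫ ω, Real.log (1 + g11 ω * Q.1 ω) ∂μ) := by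
            exact add_le_add (by nlinarith) (by nlinarith)
        _ ≤ _ := combo_integral_le hP1i hQ1i hN1i (fun ω => by
            have := log_combo ha hb hab
              (show (0:ℝ) < 1 + g11 ω * P.1 ω by nlinarith [hn11 ω, hPn1 ω])
              (show (0:ℝ) < 1 + g11 ω * Q.1 ω by nlinarith [hn11 ω, hQn1 ω])
            simp only [hN]
            calc a * Real.log (1 + g11 ω * P.1 ω) + b * Real.log (1 + g11 ω * Q.1 ω)
                ≤ Real.log (a * (1 + g11 ω * P.1 ω) + b * (1 + g11 ω * Q.1 ω)) := this
              _ = Real.log (1 + g11 ω * (a * P.1 ω + b * Q.1 ω)) := by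
                  have hb' : b = 1 - a := by linarith
                  rw [hb']; ring_nf)
    · calc a * x.2 + b * y.2 ≤ a * (∫ ω, Real.log (1 + g12 ω * P.2 ω) ∂μ)
            + b * (∫ ω, Real.log (1 + g12 ω * Q.2 ω) ∂μ) := by
            exact add_le_add (by nlinarith) (by nlinarith)
        _ ≤ _ := combo_integral_le hP2i hQ2i hN2i (fun ω => by
            have := log_combo ha hb hab
              (show (0:ℝ) < 1 + g12 ω * P.2 ω by nlinarith [hn12 ω, hPn2 ω])
              (show (0:ℝ) < 1 + g12 ω * Q.2 ω by nlinarith [hn12 ω, hQn2 ω])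
            simp only [hN]
            calc a * Real.log (1 + g12 ω * P.2 ω) + b * Real.log (1 + g12 ω * Q.2 ω)
                ≤ Real.log (a * (1 + g12 ω * P.2 ω) + b * (1 + g12 ω * Q.2 ω)) := this
              _ = Real.log (1 + g12 ω * (a * P.2 ω + b * Q.2 ω)) := by
                  have hb' : b = 1 - a := by linarith
                  rw [hb']; ring_nf)
    · calc a * x.1 + b * y.1 + (a * x.2 + b * y.2)
          = a * (x.1 + x.2) + b * (y.1 + y.2) := by ring
        _ ≤ a * (∫ ω, Real.log (1 + g11 ω * P.1 ω + g12 ω * P.2 ω) ∂μ)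
            + b * (∫ ω, Real.log (1 + g11 ω * Q.1 ω + g12 ω * Q.2 ω) ∂μ) :=
            add_le_add (by nlinarith) (by nlinarith)
        _ ≤ _ := combo_integral_le hPint hQint hNint (fun ω => by
            have := log_combo ha hb hab
              (show (0:ℝ) < 1 + g11 ω * P.1 ω + g12 ω * P.2 ω by
                nlinarith [hn11 ω, hPn1 ω, hn12 ω, hPn2 ω])
              (show (0:ℝ) < 1 + g11 ω * Q.1 ω + g12 ω * Q.2 ω by
                nlinarith [hn11 ω, hQn1 ω, hn12 ω, hQn2 ω])
            simp only [hN]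
            calc a * Real.log (1 + g11 ω * P.1 ω + g12 ω * P.2 ω)
                  + b * Real.log (1 + g11 ω * Q.1 ω + g12 ω * Q.2 ω)
                ≤ Real.log (a * (1 + g11 ω * P.1 ω + g12 ω * P.2 ω)
                  + b * (1 + g11 ω * Q.1 ω + g12 ω * Q.2 ω)) := this
              _ = Real.log (1 + g11 ω * (a * P.1 ω + b * Q.1 ω)
                  + g12 ω * (a * P.2 ω + b * Q.2 ω)) := by
                  have hb' : b = 1 - a := by linarith
                  rw [hb']; ring_nf)
  · obtain ⟨-, hPint⟩ := hint P ⟨hPm1, hPm2, hPn1, hPn2, hPi1, hPi2, hPb1', hPb2'⟩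
    obtain ⟨-, hQint⟩ := hint Q ⟨hQm1, hQm2, hQn1, hQn2, hQi1, hQi2, hQb1', hQb2'⟩
    obtain ⟨-, hNint⟩ := hint N hNfeas
    have hP1i : Integrable (fun ω => Real.log (1 + g21 ω * P.1 ω)) μ :=
      integrable_log_of_le (by fun_prop) (fun ω => by nlinarith [hn21 ω, hPn1 ω])
        (fun ω => by nlinarith [hn22 ω, hPn2 ω]) hPint
    have hP2i : Integrable (fun ω => Real.log (1 + g22 ω * P.2 ω)) μ :=
      integrable_log_of_le (by fun_prop) (fun ω => by nlinarith [hn22 ω, hPn2 ω])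
        (fun ω => by nlinarith [hn21 ω, hPn1 ω]) hPint
    have hQ1i : Integrable (fun ω => Real.log (1 + g21 ω * Q.1 ω)) μ :=
      integrable_log_of_le (by fun_prop) (fun ω => by nlinarith [hn21 ω, hQn1 ω])
        (fun ω => by nlinarith [hn22 ω, hQn2 ω]) hQint
    have hQ2i : Integrable (fun ω => Real.log (1 + g22 ω * Q.2 ω)) μ :=
      integrable_log_of_le (by fun_prop) (fun ω => by nlinarith [hn22 ω, hQn2 ω])
        (fun ω => by nlinarith [hn21 ω, hQn1 ω]) hQint
    have hN1i : Integrable (fun ω => Real.log (1 + g21 ω * N.1 ω)) μ :=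
      integrable_log_of_le (by simp only [hN]; fun_prop)
        (fun ω => by
          simp only [hN]
          nlinarith [mul_nonneg (hn21 ω)
            (add_nonneg (mul_nonneg ha (hPn1 ω)) (mul_nonneg hb (hQn1 ω)))])
        (fun ω => by
          simp only [hN]
          nlinarith [mul_nonneg (hn22 ω)
            (add_nonneg (mul_nonneg ha (hPn2 ω)) (mul_nonneg hb (hQn2 ω)))]) hNint
    have hN2i : Integrable (fun ω => Real.log (1 + g22 ω * N.2 ω)) μ :=
      integrable_log_of_le (by simp only [hN]; fun_prop)
        (fun ω => by
          simp only [hN]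
          nlinarith [mul_nonneg (hn22 ω)
            (add_nonneg (mul_nonneg ha (hPn2 ω)) (mul_nonneg hb (hQn2 ω)))])
        (fun ω => by
          simp only [hN]
          nlinarith [mul_nonneg (hn21 ω)
            (add_nonneg (mul_nonneg ha (hPn1 ω)) (mul_nonneg hb (hQn1 ω)))]) hNint
    obtain ⟨hx0, hx0', hx1, hx2, hx12⟩ := hxP2
    obtain ⟨hy0, hy0', hy1, hy2, hy12⟩ := hyQ2
    simp only [macRegion, Set.mem_setOf_eq, Prod.fst_add, Prod.snd_add, Prod.smul_fst,
      Prod.smul_snd, smul_eq_mul]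
    refine ⟨add_nonneg (mul_nonneg ha hx0) (mul_nonneg hb hy0),
      add_nonneg (mul_nonneg ha hx0') (mul_nonneg hb hy0'), ?_, ?_, ?_⟩
    · calc a * x.1 + b * y.1 ≤ a * (∫ ω, Real.log (1 + g21 ω * P.1 ω) ∂μ)
            + b * (∫ ω, Real.log (1 + g21 ω * Q.1 ω) ∂μ) := by
            exact add_le_add (by nlinarith) (by nlinarith)
        _ ≤ _ := combo_integral_le hP1i hQ1i hN1i (fun ω => by
            have := log_combo ha hb hab
              (show (0:ℝ) < 1 + g21 ω * P.1 ω by nlinarith [hn21 ω, hPn1 ω])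
              (show (0:ℝ) < 1 + g21 ω * Q.1 ω by nlinarith [hn21 ω, hQn1 ω])
            simp only [hN]
            calc a * Real.log (1 + g21 ω * P.1 ω) + b * Real.log (1 + g21 ω * Q.1 ω)
                ≤ Real.log (a * (1 + g21 ω * P.1 ω) + b * (1 + g21 ω * Q.1 ω)) := this
              _ = Real.log (1 + g21 ω * (a * P.1 ω + b * Q.1 ω)) := by
                  have hb' : b = 1 - a := by linarith
                  rw [hb']; ring_nf)
    · calc a * x.2 + b * y.2 ≤ a * (∫ ω, Real.log (1 + g22 ω * P.2 ω) ∂μ)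
            + b * (∫ ω, Real.log (1 + g22 ω * Q.2 ω) ∂μ) := by
            exact add_le_add (by nlinarith) (by nlinarith)
        _ ≤ _ := combo_integral_le hP2i hQ2i hN2i (fun ω => by
            have := log_combo ha hb hab
              (show (0:ℝ) < 1 + g22 ω * P.2 ω by nlinarith [hn22 ω, hPn2 ω])
              (show (0:ℝ) < 1 + g22 ω * Q.2 ω by nlinarith [hn22 ω, hQn2 ω])
            simp only [hN]
            calc a * Real.log (1 + g22 ω * P.2 ω) + b * Real.log (1 + g22 ω * Q.2 ω)
                ≤ Real.log (a * (1 + g22 ω * P.2 ω) + b * (1 + g22 ω * Q.2 ω)) := this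
              _ = Real.log (1 + g22 ω * (a * P.2 ω + b * Q.2 ω)) := by
                  have hb' : b = 1 - a := by linarith
                  rw [hb']; ring_nf)
    · calc a * x.1 + b * y.1 + (a * x.2 + b * y.2)
          = a * (x.1 + x.2) + b * (y.1 + y.2) := by ring
        _ ≤ a * (∫ ω, Real.log (1 + g21 ω * P.1 ω + g22 ω * P.2 ω) ∂μ)
            + b * (∫ ω, Real.log (1 + g21 ω * Q.1 ω + g22 ω * Q.2 ω) ∂μ) :=
            add_le_add (by nlinarith) (by nlinarith)
        _ ≤ _ := combo_integral_le hPint hQint hNint (fun ω => by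
            have := log_combo ha hb hab
              (show (0:ℝ) < 1 + g21 ω * P.1 ω + g22 ω * P.2 ω by
                nlinarith [hn21 ω, hPn1 ω, hn22 ω, hPn2 ω])
              (show (0:ℝ) < 1 + g21 ω * Q.1 ω + g22 ω * Q.2 ω by
                nlinarith [hn21 ω, hQn1 ω, hn22 ω, hQn2 ω])
            simp only [hN]
            calc a * Real.log (1 + g21 ω * P.1 ω + g22 ω * P.2 ω)
                  + b * Real.log (1 + g21 ω * Q.1 ω + g22 ω * Q.2 ω)
                ≤ Real.log (a * (1 + g21 ω * P.1 ω + g22 ω * P.2 ω)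
                  + b * (1 + g21 ω * Q.1 ω + g22 ω * Q.2 ω)) := this
              _ = Real.log (1 + g21 ω * (a * P.1 ω + b * Q.1 ω)
                  + g22 ω * (a * P.2 ω + b * Q.2 ω)) := by
                  have hb' : b = 1 - a := by linarith
                  rw [hb']; ring_nf)
end

section
/- Let P = (P₁,P₂) be a power policy satisfying the ergodic very strong condition: ∫ C(g₁₁P₁) dμ + ∫ C(g₂₂P₂) dμ < ∫ C(g_{j1}P₁ + g_{j2}P₂) dμ for both j = 1 and j = 2. Then the rectangle {(R₁,R₂) ∈ [0,∞)² : R₁ ≤ ∫ C(g₁₁P₁) dμ and R₂ ≤ ∫ C(g₂₂P₂) dμ} is contained in C₁(P) ∩ C₂(P), the intersection of the two receivers' MAC rate regions. -/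
open MeasureTheory

/-- If a power policy `P = (P₁,P₂)` satisfies the ergodic very strong
condition, then the rectangle
`{(R₁,R₂) ∈ [0,∞)² : R₁ ≤ ∫ C(g₁₁P₁), R₂ ≤ ∫ C(g₂₂P₂)}` is contained in
`C₁(P) ∩ C₂(P)`, the intersection of the two receivers' MAC rate regions. -/
theorem stmt4 {Ω : Type*} [MeasurableSpace Ω] (μ : Measure Ω) [IsProbabilityMeasure μ]
    (g11 g12 g21 g22 P1 P2 : Ω → ℝ)
    (hn11 : ∀ ω, 0 ≤ g11 ω) (hn12 : ∀ ω, 0 ≤ g12 ω)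
    (hn21 : ∀ ω, 0 ≤ g21 ω) (hn22 : ∀ ω, 0 ≤ g22 ω)
    (hP1 : ∀ ω, 0 ≤ P1 ω) (hP2 : ∀ ω, 0 ≤ P2 ω)
    (hi1 : Integrable (fun ω => Real.log (1 + g11 ω * P1 ω)) μ)
    (hi2 : Integrable (fun ω => Real.log (1 + g22 ω * P2 ω)) μ)
    (hi3 : Integrable (fun ω => Real.log (1 + g12 ω * P2 ω)) μ)
    (hi4 : Integrable (fun ω => Real.log (1 + g21 ω * P1 ω)) μ)
    (hi5 : Integrable (fun ω => Real.log (1 + g11 ω * P1 ω + g12 ω * P2 ω)) μ)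
    (hi6 : Integrable (fun ω => Real.log (1 + g21 ω * P1 ω + g22 ω * P2 ω)) μ)
    (hEVS1 : ∫ ω, Real.log (1 + g11 ω * P1 ω) ∂μ + ∫ ω, Real.log (1 + g22 ω * P2 ω) ∂μ <
      ∫ ω, Real.log (1 + g11 ω * P1 ω + g12 ω * P2 ω) ∂μ)
    (hEVS2 : ∫ ω, Real.log (1 + g11 ω * P1 ω) ∂μ + ∫ ω, Real.log (1 + g22 ω * P2 ω) ∂μ <
      ∫ ω, Real.log (1 + g21 ω * P1 ω + g22 ω * P2 ω) ∂μ) :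
    {R : ℝ × ℝ | 0 ≤ R.1 ∧ 0 ≤ R.2 ∧
        R.1 ≤ ∫ ω, Real.log (1 + g11 ω * P1 ω) ∂μ ∧
        R.2 ≤ ∫ ω, Real.log (1 + g22 ω * P2 ω) ∂μ} ⊆
      macRegion μ g11 g12 P1 P2 ∩ macRegion μ g21 g22 P1 P2 := by
  -- subadditivity lemma: ∫ log(1+a+b) ≤ ∫ log(1+a) + ∫ log(1+b)
  have key : ∀ (a b : Ω → ℝ), (∀ ω, 0 ≤ a ω) → (∀ ω, 0 ≤ b ω) →
      Integrable (fun ω => Real.log (1 + a ω)) μ →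
      Integrable (fun ω => Real.log (1 + b ω)) μ →
      Integrable (fun ω => Real.log (1 + a ω + b ω)) μ →
      ∫ ω, Real.log (1 + a ω + b ω) ∂μ ≤
        ∫ ω, Real.log (1 + a ω) ∂μ + ∫ ω, Real.log (1 + b ω) ∂μ := by
    intro a b ha hb hia hib hiab
    rw [← integral_add hia hib]
    apply integral_mono hiab (hia.add hib)
    intro ω
    have h1 : (0:ℝ) < 1 + a ω := by linarith [ha ω]
    have h2 : (0:ℝ) < 1 + b ω := by linarith [hb ω]
    have h3 : (0:ℝ) < 1 + a ω + b ω := by linarith [ha ω, hb ω]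
    calc Real.log (1 + a ω + b ω) ≤ Real.log ((1 + a ω) * (1 + b ω)) := by
          apply Real.log_le_log h3; nlinarith [ha ω, hb ω]
      _ = Real.log (1 + a ω) + Real.log (1 + b ω) := Real.log_mul h1.ne' h2.ne'
  have k1 := key (fun ω => g11 ω * P1 ω) (fun ω => g12 ω * P2 ω)
    (fun ω => mul_nonneg (hn11 ω) (hP1 ω)) (fun ω => mul_nonneg (hn12 ω) (hP2 ω))
    hi1 hi3 hi5
  have k2 := key (fun ω => g21 ω * P1 ω) (fun ω => g22 ω * P2 ω)
    (fun ω => mul_nonneg (hn21 ω) (hP1 ω)) (fun ω => mul_nonneg (hn22 ω) (hP2 ω))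
    hi4 hi2 hi6
  rintro ⟨R1, R2⟩ ⟨h1, h2, h3, h4⟩
  simp only [macRegion, Set.mem_inter_iff, Set.mem_setOf_eq] at *
  have e1 : ∫ ω, Real.log (1 + g22 ω * P2 ω) ∂μ < ∫ ω, Real.log (1 + g12 ω * P2 ω) ∂μ := by
    linarith
  have e2 : ∫ ω, Real.log (1 + g11 ω * P1 ω) ∂μ < ∫ ω, Real.log (1 + g21 ω * P1 ω) ∂μ := by
    linarith
  exact ⟨⟨h1, h2, h3, by linarith, by linarith⟩, ⟨h1, h2, by linarith, h4, by linarith⟩⟩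
end

section
/- Suppose the fading IFC is uniformly strong, i.e. g₁₁(ω) ≤ g₂₁(ω) and g₂₂(ω) ≤ g₁₂(ω) for μ-almost every ω. Then for every power policy P = (P₁,P₂), the maximum of R₁ + R₂ over C₁(P) ∩ C₂(P) is attained and equals min{ ∫ C(g₁₁P₁ + g₁₂P₂) dμ, ∫ C(g₂₁P₁ + g₂₂P₂) dμ, ∫ C(g₁₁P₁) dμ + ∫ C(g₂₂P₂) dμ }. -/
open MeasureTheory

/-- For a uniformly strong fading IFC (`g₁₁ ≤ g₂₁` and `g₂₂ ≤ g₁₂`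
a.e.), for every power policy `P = (P₁,P₂)` the maximum of `R₁ + R₂` over
`C₁(P) ∩ C₂(P)` is attained and equals
`min{∫C(g₁₁P₁+g₁₂P₂), ∫C(g₂₁P₁+g₂₂P₂), ∫C(g₁₁P₁) + ∫C(g₂₂P₂)}`. -/
theorem stmt7 {Ω : Type*} [MeasurableSpace Ω] (μ : Measure Ω) [IsProbabilityMeasure μ]
    (g11 g12 g21 g22 : Ω → ℝ)
    (hn11 : ∀ ω, 0 ≤ g11 ω) (hn12 : ∀ ω, 0 ≤ g12 ω)
    (hn21 : ∀ ω, 0 ≤ g21 ω) (hn22 : ∀ ω, 0 ≤ g22 ω)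
    (hUS : ∀ᵐ ω ∂μ, g11 ω ≤ g21 ω ∧ g22 ω ≤ g12 ω)
    (P1 P2 : Ω → ℝ) (hP1m : Measurable P1) (hP2m : Measurable P2)
    (hP1 : ∀ ω, 0 ≤ P1 ω) (hP2 : ∀ ω, 0 ≤ P2 ω)
    (hi1 : Integrable (fun ω => Real.log (1 + g11 ω * P1 ω)) μ)
    (hi2 : Integrable (fun ω => Real.log (1 + g12 ω * P2 ω)) μ)
    (hi3 : Integrable (fun ω => Real.log (1 + g21 ω * P1 ω)) μ)
    (hi4 : Integrable (fun ω => Real.log (1 + g22 ω * P2 ω)) μ)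
    (hi5 : Integrable (fun ω => Real.log (1 + g11 ω * P1 ω + g12 ω * P2 ω)) μ)
    (hi6 : Integrable (fun ω => Real.log (1 + g21 ω * P1 ω + g22 ω * P2 ω)) μ) :
    IsGreatest ((fun R : ℝ × ℝ => R.1 + R.2) ''
        (macRegion μ g11 g12 P1 P2 ∩ macRegion μ g21 g22 P1 P2))
      (min (min (∫ ω, Real.log (1 + g11 ω * P1 ω + g12 ω * P2 ω) ∂μ)
                (∫ ω, Real.log (1 + g21 ω * P1 ω + g22 ω * P2 ω) ∂μ))
           (∫ ω, Real.log (1 + g11 ω * P1 ω) ∂μ +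
              ∫ ω, Real.log (1 + g22 ω * P2 ω) ∂μ)) := by
  set A := ∫ ω, Real.log (1 + g11 ω * P1 ω) ∂μ with hA
  set B := ∫ ω, Real.log (1 + g22 ω * P2 ω) ∂μ with hB
  set S1 := ∫ ω, Real.log (1 + g11 ω * P1 ω + g12 ω * P2 ω) ∂μ with hS1
  set S2 := ∫ ω, Real.log (1 + g21 ω * P1 ω + g22 ω * P2 ω) ∂μ with hS2
  set D1 := ∫ ω, Real.log (1 + g12 ω * P2 ω) ∂μ with hD1
  set D2 := ∫ ω, Real.log (1 + g21 ω * P1 ω) ∂μ with hD2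
  have hAnn : 0 ≤ A := integral_nonneg fun ω => Real.log_nonneg (by nlinarith [hn11 ω, hP1 ω])
  have hBnn : 0 ≤ B := integral_nonneg fun ω => Real.log_nonneg (by nlinarith [hn22 ω, hP2 ω])
  have hBD1 : B ≤ D1 := by
    refine integral_mono_ae hi4 hi2 ?_
    filter_upwards [hUS] with ω h
    exact Real.log_le_log (by nlinarith [hn22 ω, hP2 ω]) (by nlinarith [hP2 ω, h.2])
  have hBS1 : B ≤ S1 := by
    refine integral_mono_ae hi4 hi5 ?_
    filter_upwards [hUS] with ω h
    exact Real.log_le_log (by nlinarith [hn22 ω, hP2 ω])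
      (by nlinarith [hP2 ω, h.2, hn11 ω, hP1 ω])
  have hBS2 : B ≤ S2 := by
    refine integral_mono hi4 hi6 fun ω => ?_
    exact Real.log_le_log (by nlinarith [hn22 ω, hP2 ω]) (by nlinarith [hn21 ω, hP1 ω])
  have hAD2 : A ≤ D2 := by
    refine integral_mono_ae hi1 hi3 ?_
    filter_upwards [hUS] with ω h
    exact Real.log_le_log (by nlinarith [hn11 ω, hP1 ω]) (by nlinarith [hP1 ω, h.1])
  set M := min (min S1 S2) (A + B) with hM
  have hMS1 : M ≤ S1 := le_trans (min_le_left _ _) (min_le_left _ _)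
  have hMS2 : M ≤ S2 := le_trans (min_le_left _ _) (min_le_right _ _)
  have hMAB : M ≤ A + B := min_le_right _ _
  have hBM : B ≤ M := le_min (le_min hBS1 hBS2) (by linarith)
  constructor
  · refine ⟨(M - B, B), ⟨⟨by simp; linarith, hBnn, by simp; linarith, hBD1, by
        simp; linarith⟩, ⟨by simp; linarith, hBnn, by simp; linarith, le_refl _, by
        simp; linarith⟩⟩, by simp⟩
  · rintro x ⟨⟨r1, r2⟩, ⟨⟨_, _, hr1A, _, hrS1⟩, ⟨_, _, _, hr2B, hrS2⟩⟩, rfl⟩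
    simp only
    exact le_min (le_min hrS1 hrS2) (by dsimp at hr1A hr2B ⊢; linarith)
end

section
/- For a power policy P = (P₁,P₂), define S⁽¹⁾ = ∫ C(g₁₁P₁) dμ + ∫ C(g₂₂P₂) dμ, S⁽²⁾ = ∫ C(g₂₁P₁) dμ + ∫ C(g₁₂P₂) dμ, S⁽³ᵃ⁾ = ∫ C(g₂₁P₁ + g₂₂P₂) dμ, and S⁽³ᵇ⁾ = ∫ C(g₁₁P₁ + g₁₂P₂) dμ. If S⁽¹⁾ < min(S⁽³ᵃ⁾, S⁽³ᵇ⁾), then S⁽¹⁾ < S⁽²⁾; symmetrically, if S⁽²⁾ < min(S⁽³ᵃ⁾, S⁽³ᵇ⁾), then S⁽²⁾ < S⁽¹⁾. Consequently the conditions defining Case 1 and Case 2 of the compound-MAC sum-rate optimization cannot hold simultaneously. -/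
open MeasureTheory

lemma log_add_le {a b : ℝ} (ha : 0 ≤ a) (hb : 0 ≤ b) :
    Real.log (1 + a + b) ≤ Real.log (1 + a) + Real.log (1 + b) := by
  rw [← Real.log_mul (by positivity) (by positivity)]
  apply Real.log_le_log (by positivity)
  nlinarith

/-- With the four candidate compound-MAC sum-rates
`S⁽¹⁾ = ∫C(g₁₁P₁) + ∫C(g₂₂P₂)`, `S⁽²⁾ = ∫C(g₂₁P₁) + ∫C(g₁₂P₂)`,
`S⁽³ᵃ⁾ = ∫C(g₂₁P₁ + g₂₂P₂)`, `S⁽³ᵇ⁾ = ∫C(g₁₁P₁ + g₁₂P₂)`,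
if `S⁽¹⁾ < min(S⁽³ᵃ⁾, S⁽³ᵇ⁾)` then `S⁽¹⁾ < S⁽²⁾`; symmetrically
if `S⁽²⁾ < min(S⁽³ᵃ⁾, S⁽³ᵇ⁾)` then `S⁽²⁾ < S⁽¹⁾`; consequently the Case 1 and
Case 2 conditions cannot hold simultaneously. -/
theorem stmt9 {Ω : Type*} [MeasurableSpace Ω] (μ : Measure Ω) [IsProbabilityMeasure μ]
    (g11 g12 g21 g22 P1 P2 : Ω → ℝ)
    (hn11 : ∀ ω, 0 ≤ g11 ω) (hn12 : ∀ ω, 0 ≤ g12 ω)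
    (hn21 : ∀ ω, 0 ≤ g21 ω) (hn22 : ∀ ω, 0 ≤ g22 ω)
    (hP1 : ∀ ω, 0 ≤ P1 ω) (hP2 : ∀ ω, 0 ≤ P2 ω)
    (hi1 : Integrable (fun ω => Real.log (1 + g11 ω * P1 ω)) μ)
    (hi2 : Integrable (fun ω => Real.log (1 + g22 ω * P2 ω)) μ)
    (hi3 : Integrable (fun ω => Real.log (1 + g21 ω * P1 ω)) μ)
    (hi4 : Integrable (fun ω => Real.log (1 + g12 ω * P2 ω)) μ)
    (hi5 : Integrable (fun ω => Real.log (1 + g21 ω * P1 ω + g22 ω * P2 ω)) μ)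
    (hi6 : Integrable (fun ω => Real.log (1 + g11 ω * P1 ω + g12 ω * P2 ω)) μ)
    (S1 S2 S3a S3b : ℝ)
    (hS1 : S1 = ∫ ω, Real.log (1 + g11 ω * P1 ω) ∂μ + ∫ ω, Real.log (1 + g22 ω * P2 ω) ∂μ)
    (hS2 : S2 = ∫ ω, Real.log (1 + g21 ω * P1 ω) ∂μ + ∫ ω, Real.log (1 + g12 ω * P2 ω) ∂μ)
    (hS3a : S3a = ∫ ω, Real.log (1 + g21 ω * P1 ω + g22 ω * P2 ω) ∂μ)
    (hS3b : S3b = ∫ ω, Real.log (1 + g11 ω * P1 ω + g12 ω * P2 ω) ∂μ) :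
    (S1 < min S3a S3b → S1 < S2) ∧
    (S2 < min S3a S3b → S2 < S1) ∧
    ¬(S1 < min S3a S3b ∧ S2 < min S3a S3b) := by
  have key1 : S3a ≤ ∫ ω, Real.log (1 + g21 ω * P1 ω) ∂μ + ∫ ω, Real.log (1 + g22 ω * P2 ω) ∂μ := by
    rw [hS3a, ← integral_add hi3 hi2]
    exact integral_mono hi5 (hi3.add hi2) fun ω =>
      log_add_le (mul_nonneg (hn21 ω) (hP1 ω)) (mul_nonneg (hn22 ω) (hP2 ω))
  have key2 : S3b ≤ ∫ ω, Real.log (1 + g11 ω * P1 ω) ∂μ + ∫ ω, Real.log (1 + g12 ω * P2 ω) ∂μ := by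
    rw [hS3b, ← integral_add hi1 hi4]
    exact integral_mono hi6 (hi1.add hi4) fun ω =>
      log_add_le (mul_nonneg (hn11 ω) (hP1 ω)) (mul_nonneg (hn12 ω) (hP2 ω))
  have h1 : S1 < min S3a S3b → S1 < S2 := by
    intro h
    have ha := lt_of_lt_of_le (lt_of_lt_of_le h (min_le_left _ _)) key1
    have hb := lt_of_lt_of_le (lt_of_lt_of_le h (min_le_right _ _)) key2
    rw [hS1] at ha hb ⊢; rw [hS2]; linarith
  have h2 : S2 < min S3a S3b → S2 < S1 := by
    intro h
    have ha := lt_of_lt_of_le (lt_of_lt_of_le h (min_le_left _ _)) key1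
    have hb := lt_of_lt_of_le (lt_of_lt_of_le h (min_le_right _ _)) key2
    rw [hS2] at ha hb ⊢; rw [hS1]; linarith
  exact ⟨h1, h2, fun ⟨a, b⟩ => lt_irrefl S1 (lt_trans (h1 a) (h2 b))⟩
end

section
/- Let (Ω, ℱ, μ) be a probability space, g₁, g₂ : Ω → [0,∞) measurable, and P̄₁, P̄₂ > 0. Suppose P* = (P₁*, P₂*) is a pair of measurable nonnegative functions with ∫ Pₖ* dμ = P̄ₖ for k = 1,2, and there exist λ₁, λ₂ > 0 such that for μ-almost every ω and each k = 1,2: gₖ(ω)/(1 + g₁(ω)P₁*(ω) + g₂(ω)P₂*(ω)) ≤ λₖ, with equality whenever Pₖ*(ω) > 0. Then for every pair of measurable nonnegative functions P = (P₁,P₂) with ∫ Pₖ dμ ≤ P̄ₖ for k = 1,2 (and the relevant logs integrable), ∫ log(1 + g₁P₁ + g₂P₂) dμ ≤ ∫ log(1 + g₁P₁* + g₂P₂*) dμ. -/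
open MeasureTheory

/-- KKT sufficiency for the fading MAC sum-rate. If `P* = (P₁*, P₂*)`
meets the power constraints with equality and there exist multipliers `λ₁, λ₂ > 0`
with `gₖ/(1 + g₁P₁* + g₂P₂*) ≤ λₖ` a.e., with equality wherever `Pₖ* > 0`, then
`P*` maximizes `∫ log(1 + g₁P₁ + g₂P₂) dμ` over all feasible power policies. -/
theorem stmt10 {Ω : Type*} [MeasurableSpace Ω] (μ : Measure Ω) [IsProbabilityMeasure μ]
    (g1 g2 : Ω → ℝ) (hg1m : Measurable g1) (hg2m : Measurable g2)
    (hg1 : ∀ ω, 0 ≤ g1 ω) (hg2 : ∀ ω, 0 ≤ g2 ω)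
    (Pb1 Pb2 : ℝ) (hPb1 : 0 < Pb1) (hPb2 : 0 < Pb2)
    (P1s P2s : Ω → ℝ) (hP1sm : Measurable P1s) (hP2sm : Measurable P2s)
    (hP1s : ∀ ω, 0 ≤ P1s ω) (hP2s : ∀ ω, 0 ≤ P2s ω)
    (hP1sI : Integrable P1s μ) (hP2sI : Integrable P2s μ)
    (hPow1 : ∫ ω, P1s ω ∂μ = Pb1) (hPow2 : ∫ ω, P2s ω ∂μ = Pb2)
    (lam1 lam2 : ℝ) (hlam1 : 0 < lam1) (hlam2 : 0 < lam2)
    (hKKT1 : ∀ᵐ ω ∂μ, g1 ω / (1 + g1 ω * P1s ω + g2 ω * P2s ω) ≤ lam1 ∧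
      (0 < P1s ω → g1 ω / (1 + g1 ω * P1s ω + g2 ω * P2s ω) = lam1))
    (hKKT2 : ∀ᵐ ω ∂μ, g2 ω / (1 + g1 ω * P1s ω + g2 ω * P2s ω) ≤ lam2 ∧
      (0 < P2s ω → g2 ω / (1 + g1 ω * P1s ω + g2 ω * P2s ω) = lam2))
    (hIs : Integrable (fun ω => Real.log (1 + g1 ω * P1s ω + g2 ω * P2s ω)) μ) :
    ∀ P1 P2 : Ω → ℝ, Measurable P1 → Measurable P2 →
      (∀ ω, 0 ≤ P1 ω) → (∀ ω, 0 ≤ P2 ω) →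
      Integrable P1 μ → Integrable P2 μ →
      ∫ ω, P1 ω ∂μ ≤ Pb1 → ∫ ω, P2 ω ∂μ ≤ Pb2 →
      Integrable (fun ω => Real.log (1 + g1 ω * P1 ω + g2 ω * P2 ω)) μ →
      ∫ ω, Real.log (1 + g1 ω * P1 ω + g2 ω * P2 ω) ∂μ ≤
        ∫ ω, Real.log (1 + g1 ω * P1s ω + g2 ω * P2s ω) ∂μ := by
  intro P1 P2 hP1m hP2m hP1 hP2 hP1I hP2I hI1 hI2 hI
  -- pointwise a.e. bound:
  -- log S ≤ log S* + lam1*(P1-P1s) + lam2*(P2-P2s)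
  have hSpos : ∀ ω, (0:ℝ) < 1 + g1 ω * P1 ω + g2 ω * P2 ω := fun ω => by
    have := mul_nonneg (hg1 ω) (hP1 ω); have := mul_nonneg (hg2 ω) (hP2 ω); linarith
  have hSspos : ∀ ω, (0:ℝ) < 1 + g1 ω * P1s ω + g2 ω * P2s ω := fun ω => by
    have := mul_nonneg (hg1 ω) (hP1s ω); have := mul_nonneg (hg2 ω) (hP2s ω); linarith
  have hpt : ∀ᵐ ω ∂μ, Real.log (1 + g1 ω * P1 ω + g2 ω * P2 ω) ≤
      Real.log (1 + g1 ω * P1s ω + g2 ω * P2s ω)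
        + (lam1 * (P1 ω - P1s ω) + lam2 * (P2 ω - P2s ω)) := by
    filter_upwards [hKKT1, hKKT2] with ω h1 h2
    set S := 1 + g1 ω * P1 ω + g2 ω * P2 ω with hS
    set Ss := 1 + g1 ω * P1s ω + g2 ω * P2s ω with hSs
    have hSp := hSpos ω
    have hSsp := hSspos ω
    have hlog : Real.log S - Real.log Ss ≤ (S - Ss) / Ss := by
      have ht : (0:ℝ) < S / Ss := div_pos hSp hSsp
      have := Real.log_le_sub_one_of_pos ht
      rw [Real.log_div hSp.ne' hSsp.ne'] at this
      have h2 : S / Ss - 1 = (S - Ss) / Ss := by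
        rw [sub_div, div_self (ne_of_gt (show (0:ℝ) < Ss from hSsp))]
      linarith [h2 ▸ this]
    have hSdiff : (S - Ss) / Ss = g1 ω / Ss * (P1 ω - P1s ω) + g2 ω / Ss * (P2 ω - P2s ω) := by
      field_simp [hS, hSs]; ring
    have key1 : g1 ω / Ss * (P1 ω - P1s ω) ≤ lam1 * (P1 ω - P1s ω) := by
      rcases (hP1s ω).lt_or_eq with hpos | h0
      · rw [h1.2 hpos]
      · rw [← h0, sub_zero]
        exact mul_le_mul_of_nonneg_right h1.1 (hP1 ω)
    have key2 : g2 ω / Ss * (P2 ω - P2s ω) ≤ lam2 * (P2 ω - P2s ω) := by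
      rcases (hP2s ω).lt_or_eq with hpos | h0
      · rw [h2.2 hpos]
      · rw [← h0, sub_zero]
        exact mul_le_mul_of_nonneg_right h2.1 (hP2 ω)
    linarith [hSdiff ▸ hlog]
  -- integrate
  have hImaj : Integrable (fun ω => Real.log (1 + g1 ω * P1s ω + g2 ω * P2s ω)
      + (lam1 * (P1 ω - P1s ω) + lam2 * (P2 ω - P2s ω))) μ := by
    exact hIs.add (((hP1I.sub hP1sI).const_mul lam1).add ((hP2I.sub hP2sI).const_mul lam2))
  have hmono := integral_mono_ae hI hImaj hpt
  have heval : ∫ ω, (Real.log (1 + g1 ω * P1s ω + g2 ω * P2s ω)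
      + (lam1 * (P1 ω - P1s ω) + lam2 * (P2 ω - P2s ω))) ∂μ
      = (∫ ω, Real.log (1 + g1 ω * P1s ω + g2 ω * P2s ω) ∂μ)
        + (lam1 * ((∫ ω, P1 ω ∂μ) - Pb1) + lam2 * ((∫ ω, P2 ω ∂μ) - Pb2)) := by
    have e1 : Integrable (fun ω => lam1 * (P1 ω - P1s ω)) μ := (hP1I.sub hP1sI).const_mul lam1
    have e2 : Integrable (fun ω => lam2 * (P2 ω - P2s ω)) μ := (hP2I.sub hP2sI).const_mul lam2
    have e12 : Integrable (fun ω => lam1 * (P1 ω - P1s ω) + lam2 * (P2 ω - P2s ω)) μ :=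
      e1.add e2
    rw [integral_add hIs e12, integral_add e1 e2,
      integral_const_mul, integral_const_mul, integral_sub hP1I hP1sI,
      integral_sub hP2I hP2sI, hPow1, hPow2]
  rw [heval] at hmono
  nlinarith
end

section
/- Suppose the one-sided fading IFC is uniformly strong, i.e. g₂₂(ω) ≤ g₁₂(ω) for μ-almost every ω (and g₂₁ ≡ 0). Then for every power policy P and every measurable splitting function α : Ω → [0,1], S₁(α,P) ≤ S₁(0,P) and S₂(α,P) ≤ S₂(0,P); hence min(S₁(α,P), S₂(α,P)) ≤ min(S₁(0,P), S₂(0,P)), i.e. the Han–Kobayashi sum-rate bound is maximized by allocating no power to the private message (α ≡ 0, pure common-message transmission) in every fading state. -/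
open MeasureTheory

/-- Han–Kobayashi sum-rate bound `S₁(α,P)` for the one-sided fading IFC
(`g₂₁ ≡ 0`): `S₁(α,P) = ∫ C(g₁₁P₁/(1+g₁₂αP₂)) dμ + ∫ C(g₂₂P₂) dμ`. -/
noncomputable def S1 {Ω : Type*} [MeasurableSpace Ω] (μ : Measure Ω)
    (g11 g12 g22 P1 P2 α : Ω → ℝ) : ℝ :=
  (∫ ω, Real.log (1 + g11 ω * P1 ω / (1 + g12 ω * α ω * P2 ω)) ∂μ) +
    ∫ ω, Real.log (1 + g22 ω * P2 ω) ∂μ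

/-- Han–Kobayashi sum-rate bound `S₂(α,P)` for the one-sided fading IFC
(`g₂₁ ≡ 0`): `S₂(α,P) = ∫ C(g₂₂αP₂) dμ + ∫ C((g₁₁P₁+g₁₂(1−α)P₂)/(1+g₁₂αP₂)) dμ`. -/
noncomputable def S2 {Ω : Type*} [MeasurableSpace Ω] (μ : Measure Ω)
    (g11 g12 g22 P1 P2 α : Ω → ℝ) : ℝ :=
  (∫ ω, Real.log (1 + g22 ω * α ω * P2 ω) ∂μ) +
    ∫ ω, Real.log (1 +
      (g11 ω * P1 ω + g12 ω * (1 - α ω) * P2 ω) / (1 + g12 ω * α ω * P2 ω)) ∂μ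

/-- For a uniformly strong one-sided fading IFC (`g₂₂ ≤ g₁₂` a.e.,
`g₂₁ ≡ 0`), for every power policy `P` and every measurable splitting function
`α : Ω → [0,1]`, `S₁(α,P) ≤ S₁(0,P)` and `S₂(α,P) ≤ S₂(0,P)`; hence
`min(S₁(α,P), S₂(α,P)) ≤ min(S₁(0,P), S₂(0,P))`: the Han–Kobayashi sum-rate bound
is maximized by pure common-message transmission (`α ≡ 0`). -/
theorem stmt12 {Ω : Type*} [MeasurableSpace Ω] (μ : Measure Ω) [IsProbabilityMeasure μ]
    (g11 g12 g22 : Ω → ℝ)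
    (hm11 : Measurable g11) (hm12 : Measurable g12) (hm22 : Measurable g22)
    (hn11 : ∀ ω, 0 ≤ g11 ω) (hn12 : ∀ ω, 0 ≤ g12 ω) (hn22 : ∀ ω, 0 ≤ g22 ω)
    (hUS : ∀ᵐ ω ∂μ, g22 ω ≤ g12 ω) :
    ∀ P1 P2 α : Ω → ℝ, Measurable P1 → Measurable P2 →
      (∀ ω, 0 ≤ P1 ω) → (∀ ω, 0 ≤ P2 ω) →
      Measurable α → (∀ ω, α ω ∈ Set.Icc (0 : ℝ) 1) →
      Integrable (fun ω => Real.log (1 + g11 ω * P1 ω / (1 + g12 ω * α ω * P2 ω))) μ →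
      Integrable (fun ω => Real.log (1 + g22 ω * P2 ω)) μ →
      Integrable (fun ω => Real.log (1 + g22 ω * α ω * P2 ω)) μ →
      Integrable (fun ω => Real.log (1 +
        (g11 ω * P1 ω + g12 ω * (1 - α ω) * P2 ω) / (1 + g12 ω * α ω * P2 ω))) μ →
      Integrable (fun ω => Real.log (1 + g11 ω * P1 ω)) μ →
      Integrable (fun ω => Real.log (1 + g11 ω * P1 ω + g12 ω * P2 ω)) μ →
      Integrable (fun ω => Real.log (1 + g12 ω * α ω * P2 ω)) μ →
      S1 μ g11 g12 g22 P1 P2 α ≤ S1 μ g11 g12 g22 P1 P2 (fun _ => 0) ∧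
      S2 μ g11 g12 g22 P1 P2 α ≤ S2 μ g11 g12 g22 P1 P2 (fun _ => 0) ∧
      min (S1 μ g11 g12 g22 P1 P2 α) (S2 μ g11 g12 g22 P1 P2 α) ≤
        min (S1 μ g11 g12 g22 P1 P2 (fun _ => 0)) (S2 μ g11 g12 g22 P1 P2 (fun _ => 0)) := by
  intro P1 P2 α mP1 mP2 nP1 nP2 mα hα h1 h2 h3 h4 h5 h6 h7
  have hDpos : ∀ ω, (0:ℝ) < 1 + g12 ω * α ω * P2 ω := fun ω => by
    have := mul_nonneg (mul_nonneg (hn12 ω) (hα ω).1) (nP2 ω); linarith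
  have hS1 : S1 μ g11 g12 g22 P1 P2 α ≤ S1 μ g11 g12 g22 P1 P2 (fun _ => 0) := by
    unfold S1
    simp only [mul_zero, zero_mul, add_zero, div_one]
    gcongr ?_ + _
    refine integral_mono h1 h5 fun ω => ?_
    have hd := div_nonneg (mul_nonneg (hn11 ω) (nP1 ω)) (hDpos ω).le
    have h : g11 ω * P1 ω / (1 + g12 ω * α ω * P2 ω) ≤ g11 ω * P1 ω :=
      div_le_self (mul_nonneg (hn11 ω) (nP1 ω)) (by linarith [mul_nonneg (mul_nonneg (hn12 ω) (hα ω).1) (nP2 ω)])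
    exact Real.log_le_log (show (0:ℝ) < 1 + g11 ω * P1 ω / (1 + g12 ω * α ω * P2 ω) by linarith) (by linarith)
  have hS2 : S2 μ g11 g12 g22 P1 P2 α ≤ S2 μ g11 g12 g22 P1 P2 (fun _ => 0) := by
    unfold S2
    simp only [mul_zero, zero_mul, add_zero, div_one, sub_zero, one_mul,
      Real.log_one, integral_const, smul_eq_mul, measure_univ, ENNReal.toReal_one,
      zero_add, mul_one]
    simp only [← add_assoc]
    -- rewrite second integrand
    have hrw : ∀ ω, Real.log (1 +
        (g11 ω * P1 ω + g12 ω * (1 - α ω) * P2 ω) / (1 + g12 ω * α ω * P2 ω)) =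
        Real.log (1 + g11 ω * P1 ω + g12 ω * P2 ω) -
          Real.log (1 + g12 ω * α ω * P2 ω) := by
      intro ω
      have hD := hDpos ω
      have hnum : (0:ℝ) < 1 + g11 ω * P1 ω + g12 ω * P2 ω := by
        have := mul_nonneg (hn11 ω) (nP1 ω)
        have := mul_nonneg (hn12 ω) (nP2 ω)
        linarith
      have : 1 + (g11 ω * P1 ω + g12 ω * (1 - α ω) * P2 ω) / (1 + g12 ω * α ω * P2 ω)
          = (1 + g11 ω * P1 ω + g12 ω * P2 ω) / (1 + g12 ω * α ω * P2 ω) := by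
        field_simp; ring
      rw [this, Real.log_div hnum.ne' hD.ne']
    calc (∫ ω, Real.log (1 + g22 ω * α ω * P2 ω) ∂μ) +
          ∫ ω, Real.log (1 +
            (g11 ω * P1 ω + g12 ω * (1 - α ω) * P2 ω) / (1 + g12 ω * α ω * P2 ω)) ∂μ
        = (∫ ω, Real.log (1 + g22 ω * α ω * P2 ω) ∂μ) +
          ((∫ ω, Real.log (1 + g11 ω * P1 ω + g12 ω * P2 ω) ∂μ) -
            ∫ ω, Real.log (1 + g12 ω * α ω * P2 ω) ∂μ) := by
          congr 1
          rw [← integral_sub h6 h7]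
          exact integral_congr_ae (Filter.Eventually.of_forall hrw)
      _ ≤ ∫ ω, Real.log (1 + g11 ω * P1 ω + g12 ω * P2 ω) ∂μ := by
          have hle : (∫ ω, Real.log (1 + g22 ω * α ω * P2 ω) ∂μ) ≤
              ∫ ω, Real.log (1 + g12 ω * α ω * P2 ω) ∂μ := by
            refine integral_mono_ae h3 h7 ?_
            filter_upwards [hUS] with ω hω
            have hαP := mul_nonneg (hα ω).1 (nP2 ω)
            have hpos : (0:ℝ) < 1 + g22 ω * α ω * P2 ω := by
              have := mul_nonneg (hn22 ω) (mul_nonneg (hα ω).1 (nP2 ω))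
              nlinarith
            exact Real.log_le_log hpos (by nlinarith)
          linarith
  exact ⟨hS1, hS2, min_le_min hS1 hS2⟩
end

section
/- Suppose P^wf = (P₁^wf, P₂^wf) is a feasible power policy such that, for each k = 1,2, Pₖ^wf maximizes ∫ C(g_{kk}Pₖ) dμ among all measurable Pₖ ≥ 0 with ∫ Pₖ dμ ≤ P̄ₖ, and suppose ∫ C(g₁₁P₁^wf) dμ + ∫ C(g₂₂P₂^wf) dμ < min over j = 1,2 of ∫ C(g_{j1}P₁^wf + g_{j2}P₂^wf) dμ (the Case 1 condition). Then P^wf maximizes the compound-MAC sum-rate: for every feasible policy P, min{ ∫ C(g₁₁P₁+g₁₂P₂) dμ, ∫ C(g₂₁P₁+g₂₂P₂) dμ, ∫ C(g₁₁P₁) dμ + ∫ C(g₂₂P₂) dμ } ≤ ∫ C(g₁₁P₁^wf) dμ + ∫ C(g₂₂P₂^wf) dμ, and the left-hand side evaluated at P^wf equals the right-hand side. -/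
open MeasureTheory

/-- Case 1 of the compound-MAC sum-rate optimization. If
`P^wf = (P₁^wf, P₂^wf)` is a feasible policy whose components maximize the
interference-free rates `∫ C(g_{kk}Pₖ)` among feasible single-user policies, and
the Case 1 condition
`∫C(g₁₁P₁^wf) + ∫C(g₂₂P₂^wf) < min_j ∫C(g_{j1}P₁^wf + g_{j2}P₂^wf)` holds, then
`P^wf` maximizes the compound-MAC sum-rate
`min{∫C(g₁₁P₁+g₁₂P₂), ∫C(g₂₁P₁+g₂₂P₂), ∫C(g₁₁P₁)+∫C(g₂₂P₂)}` over all feasible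
policies, and at `P^wf` this sum-rate equals `∫C(g₁₁P₁^wf) + ∫C(g₂₂P₂^wf)`. -/
theorem stmt15 {Ω : Type*} [MeasurableSpace Ω] (μ : Measure Ω) [IsProbabilityMeasure μ]
    (g11 g12 g21 g22 : Ω → ℝ)
    (hm11 : Measurable g11) (hm12 : Measurable g12)
    (hm21 : Measurable g21) (hm22 : Measurable g22)
    (hn11 : ∀ ω, 0 ≤ g11 ω) (hn12 : ∀ ω, 0 ≤ g12 ω)
    (hn21 : ∀ ω, 0 ≤ g21 ω) (hn22 : ∀ ω, 0 ≤ g22 ω)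
    (Pb1 Pb2 : ℝ) (hPb1 : 0 < Pb1) (hPb2 : 0 < Pb2)
    (P1wf P2wf : Ω → ℝ) (hwf1m : Measurable P1wf) (hwf2m : Measurable P2wf)
    (hwf1 : ∀ ω, 0 ≤ P1wf ω) (hwf2 : ∀ ω, 0 ≤ P2wf ω)
    (hwf1I : Integrable P1wf μ) (hwf2I : Integrable P2wf μ)
    (hwf1P : ∫ ω, P1wf ω ∂μ ≤ Pb1) (hwf2P : ∫ ω, P2wf ω ∂μ ≤ Pb2)
    (hwfi1 : Integrable (fun ω => Real.log (1 + g11 ω * P1wf ω)) μ)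
    (hwfi2 : Integrable (fun ω => Real.log (1 + g22 ω * P2wf ω)) μ)
    (hwfi3 : Integrable (fun ω => Real.log (1 + g11 ω * P1wf ω + g12 ω * P2wf ω)) μ)
    (hwfi4 : Integrable (fun ω => Real.log (1 + g21 ω * P1wf ω + g22 ω * P2wf ω)) μ)
    (hmax1 : ∀ P1 : Ω → ℝ, Measurable P1 → (∀ ω, 0 ≤ P1 ω) → Integrable P1 μ →
      ∫ ω, P1 ω ∂μ ≤ Pb1 →
      Integrable (fun ω => Real.log (1 + g11 ω * P1 ω)) μ →
      ∫ ω, Real.log (1 + g11 ω * P1 ω) ∂μ ≤ ∫ ω, Real.log (1 + g11 ω * P1wf ω) ∂μ)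
    (hmax2 : ∀ P2 : Ω → ℝ, Measurable P2 → (∀ ω, 0 ≤ P2 ω) → Integrable P2 μ →
      ∫ ω, P2 ω ∂μ ≤ Pb2 →
      Integrable (fun ω => Real.log (1 + g22 ω * P2 ω)) μ →
      ∫ ω, Real.log (1 + g22 ω * P2 ω) ∂μ ≤ ∫ ω, Real.log (1 + g22 ω * P2wf ω) ∂μ)
    (hCase1 : ∫ ω, Real.log (1 + g11 ω * P1wf ω) ∂μ + ∫ ω, Real.log (1 + g22 ω * P2wf ω) ∂μ <
      min (∫ ω, Real.log (1 + g11 ω * P1wf ω + g12 ω * P2wf ω) ∂μ)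
          (∫ ω, Real.log (1 + g21 ω * P1wf ω + g22 ω * P2wf ω) ∂μ)) :
    (∀ P1 P2 : Ω → ℝ, Measurable P1 → Measurable P2 →
      (∀ ω, 0 ≤ P1 ω) → (∀ ω, 0 ≤ P2 ω) →
      Integrable P1 μ → Integrable P2 μ →
      ∫ ω, P1 ω ∂μ ≤ Pb1 → ∫ ω, P2 ω ∂μ ≤ Pb2 →
      Integrable (fun ω => Real.log (1 + g11 ω * P1 ω)) μ →
      Integrable (fun ω => Real.log (1 + g22 ω * P2 ω)) μ →
      Integrable (fun ω => Real.log (1 + g11 ω * P1 ω + g12 ω * P2 ω)) μ →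
      Integrable (fun ω => Real.log (1 + g21 ω * P1 ω + g22 ω * P2 ω)) μ →
      min (min (∫ ω, Real.log (1 + g11 ω * P1 ω + g12 ω * P2 ω) ∂μ)
               (∫ ω, Real.log (1 + g21 ω * P1 ω + g22 ω * P2 ω) ∂μ))
          ((∫ ω, Real.log (1 + g11 ω * P1 ω) ∂μ) + ∫ ω, Real.log (1 + g22 ω * P2 ω) ∂μ) ≤
        (∫ ω, Real.log (1 + g11 ω * P1wf ω) ∂μ) + ∫ ω, Real.log (1 + g22 ω * P2wf ω) ∂μ) ∧
    (min (min (∫ ω, Real.log (1 + g11 ω * P1wf ω + g12 ω * P2wf ω) ∂μ)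
              (∫ ω, Real.log (1 + g21 ω * P1wf ω + g22 ω * P2wf ω) ∂μ))
         ((∫ ω, Real.log (1 + g11 ω * P1wf ω) ∂μ) + ∫ ω, Real.log (1 + g22 ω * P2wf ω) ∂μ) =
      (∫ ω, Real.log (1 + g11 ω * P1wf ω) ∂μ) + ∫ ω, Real.log (1 + g22 ω * P2wf ω) ∂μ) := by
  constructor
  · intro P1 P2 hP1m hP2m hP1n hP2n hP1I hP2I hP1P hP2P hi1 hi2 hi3 hi4
    calc min (min (∫ ω, Real.log (1 + g11 ω * P1 ω + g12 ω * P2 ω) ∂μ)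
               (∫ ω, Real.log (1 + g21 ω * P1 ω + g22 ω * P2 ω) ∂μ))
          ((∫ ω, Real.log (1 + g11 ω * P1 ω) ∂μ) + ∫ ω, Real.log (1 + g22 ω * P2 ω) ∂μ)
        ≤ (∫ ω, Real.log (1 + g11 ω * P1 ω) ∂μ) + ∫ ω, Real.log (1 + g22 ω * P2 ω) ∂μ :=
          min_le_right _ _
      _ ≤ _ := add_le_add (hmax1 P1 hP1m hP1n hP1I hP1P hi1)
          (hmax2 P2 hP2m hP2n hP2I hP2P hi2)
  · exact min_eq_right hCase1.le
end

section
/- Consider the one-sided fading IFC (g₂₁ ≡ 0). Suppose P^wf = (P₁^wf, P₂^wf) is a feasible power policy such that, for each k = 1,2, Pₖ^wf maximizes ∫ C(g_{kk}Pₖ) dμ among all measurable Pₖ ≥ 0 with ∫ Pₖ dμ ≤ P̄ₖ, and suppose S₁(0, P^wf) ≤ S₂(0, P^wf) (the ergodic very strong condition for the one-sided channel). Then the maximum over all feasible power policies P and all measurable splitting functions α : Ω → [0,1] of min(S₁(α,P), S₂(α,P)) equals S₁(0, P^wf) = ∫ C(g₁₁P₁^wf) dμ + ∫ C(g₂₂P₂^wf)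 dμ, and it is attained at α ≡ 0 and P = P^wf. -/
open MeasureTheory

/-- Ergodic very strong one-sided fading IFC (`g₂₁ ≡ 0`). If
`P^wf = (P₁^wf, P₂^wf)` is feasible, each component maximizes the corresponding
interference-free rate `∫ C(g_{kk}Pₖ)` among feasible single-user policies, and
`S₁(0,P^wf) ≤ S₂(0,P^wf)`, then the maximum over all feasible power policies `P`
and measurable splitting functions `α : Ω → [0,1]` of `min(S₁(α,P), S₂(α,P))`
equals `S₁(0,P^wf) = ∫ C(g₁₁P₁^wf) dμ + ∫ C(g₂₂P₂^wf) dμ`, attained at `α ≡ 0`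
and `P = P^wf`. -/
theorem stmt16 {Ω : Type*} [MeasurableSpace Ω] (μ : Measure Ω) [IsProbabilityMeasure μ]
    (g11 g12 g22 : Ω → ℝ)
    (hm11 : Measurable g11) (hm12 : Measurable g12) (hm22 : Measurable g22)
    (hn11 : ∀ ω, 0 ≤ g11 ω) (hn12 : ∀ ω, 0 ≤ g12 ω) (hn22 : ∀ ω, 0 ≤ g22 ω)
    (Pb1 Pb2 : ℝ) (hPb1 : 0 < Pb1) (hPb2 : 0 < Pb2)
    (P1wf P2wf : Ω → ℝ) (hwf1m : Measurable P1wf) (hwf2m : Measurable P2wf)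
    (hwf1 : ∀ ω, 0 ≤ P1wf ω) (hwf2 : ∀ ω, 0 ≤ P2wf ω)
    (hwf1I : Integrable P1wf μ) (hwf2I : Integrable P2wf μ)
    (hwf1P : ∫ ω, P1wf ω ∂μ ≤ Pb1) (hwf2P : ∫ ω, P2wf ω ∂μ ≤ Pb2)
    (hwfi1 : Integrable (fun ω => Real.log (1 + g11 ω * P1wf ω)) μ)
    (hwfi2 : Integrable (fun ω => Real.log (1 + g22 ω * P2wf ω)) μ)
    (hwfi3 : Integrable (fun ω => Real.log (1 + g11 ω * P1wf ω + g12 ω * P2wf ω)) μ)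
    (hmax1 : ∀ P1 : Ω → ℝ, Measurable P1 → (∀ ω, 0 ≤ P1 ω) → Integrable P1 μ →
      ∫ ω, P1 ω ∂μ ≤ Pb1 →
      Integrable (fun ω => Real.log (1 + g11 ω * P1 ω)) μ →
      ∫ ω, Real.log (1 + g11 ω * P1 ω) ∂μ ≤ ∫ ω, Real.log (1 + g11 ω * P1wf ω) ∂μ)
    (hmax2 : ∀ P2 : Ω → ℝ, Measurable P2 → (∀ ω, 0 ≤ P2 ω) → Integrable P2 μ →
      ∫ ω, P2 ω ∂μ ≤ Pb2 →
      Integrable (fun ω => Real.log (1 + g22 ω * P2 ω)) μ →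
      ∫ ω, Real.log (1 + g22 ω * P2 ω) ∂μ ≤ ∫ ω, Real.log (1 + g22 ω * P2wf ω) ∂μ)
    (hEVS : S1 μ g11 g12 g22 P1wf P2wf (fun _ => 0) ≤
      S2 μ g11 g12 g22 P1wf P2wf (fun _ => 0)) :
    IsGreatest {s : ℝ | ∃ P1 P2 α : Ω → ℝ,
        Measurable P1 ∧ Measurable P2 ∧ (∀ ω, 0 ≤ P1 ω) ∧ (∀ ω, 0 ≤ P2 ω) ∧
        Integrable P1 μ ∧ Integrable P2 μ ∧
        (∫ ω, P1 ω ∂μ) ≤ Pb1 ∧ (∫ ω, P2 ω ∂μ) ≤ Pb2 ∧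
        Measurable α ∧ (∀ ω, α ω ∈ Set.Icc (0 : ℝ) 1) ∧
        Integrable (fun ω => Real.log (1 + g11 ω * P1 ω / (1 + g12 ω * α ω * P2 ω))) μ ∧
        Integrable (fun ω => Real.log (1 + g22 ω * P2 ω)) μ ∧
        Integrable (fun ω => Real.log (1 + g22 ω * α ω * P2 ω)) μ ∧
        Integrable (fun ω => Real.log (1 +
          (g11 ω * P1 ω + g12 ω * (1 - α ω) * P2 ω) / (1 + g12 ω * α ω * P2 ω))) μ ∧
        Integrable (fun ω => Real.log (1 + g11 ω * P1 ω)) μ ∧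
        Integrable (fun ω => Real.log (1 + g11 ω * P1 ω + g12 ω * P2 ω)) μ ∧
        s = min (S1 μ g11 g12 g22 P1 P2 α) (S2 μ g11 g12 g22 P1 P2 α)}
      ((∫ ω, Real.log (1 + g11 ω * P1wf ω) ∂μ) +
        ∫ ω, Real.log (1 + g22 ω * P2wf ω) ∂μ) ∧
    S1 μ g11 g12 g22 P1wf P2wf (fun _ => 0) =
      (∫ ω, Real.log (1 + g11 ω * P1wf ω) ∂μ) +
        ∫ ω, Real.log (1 + g22 ω * P2wf ω) ∂μ ∧
    min (S1 μ g11 g12 g22 P1wf P2wf (fun _ => 0))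
        (S2 μ g11 g12 g22 P1wf P2wf (fun _ => 0)) =
      (∫ ω, Real.log (1 + g11 ω * P1wf ω) ∂μ) +
        ∫ ω, Real.log (1 + g22 ω * P2wf ω) ∂μ := by
  have hS1eq : S1 μ g11 g12 g22 P1wf P2wf (fun _ => 0) =
      (∫ ω, Real.log (1 + g11 ω * P1wf ω) ∂μ) +
        ∫ ω, Real.log (1 + g22 ω * P2wf ω) ∂μ := by
    simp [S1, mul_zero, zero_mul, add_zero, div_one]
  refine ⟨⟨⟨P1wf, P2wf, fun _ => 0, hwf1m, hwf2m, hwf1, hwf2, hwf1I, hwf2I,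
      hwf1P, hwf2P, measurable_const, fun ω => ⟨le_refl 0, zero_le_one⟩,
      ?_, hwfi2, ?_, ?_, hwfi1, hwfi3, ?_⟩, ?_⟩, hS1eq, ?_⟩
  · simpa [mul_zero, zero_mul, add_zero, div_one] using hwfi1
  · simp
  · simpa [mul_zero, zero_mul, add_zero, div_one, add_assoc] using hwfi3
  · rw [min_eq_left hEVS, hS1eq]
  · -- upper bound
    rintro s ⟨P1, P2, α, hP1m, hP2m, hP1n, hP2n, hP1I, hP2I, hP1b, hP2b, hαm, hα,
      hi1, hi2, hi3, hi4, hi5, hi6, rfl⟩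
    have hA : (∫ ω, Real.log (1 + g11 ω * P1 ω / (1 + g12 ω * α ω * P2 ω)) ∂μ) ≤
        ∫ ω, Real.log (1 + g11 ω * P1 ω) ∂μ := by
      refine integral_mono hi1 hi5 fun ω => ?_
      have hd : (1 : ℝ) ≤ 1 + g12 ω * α ω * P2 ω := by
        have : 0 ≤ g12 ω * α ω * P2 ω :=
          mul_nonneg (mul_nonneg (hn12 ω) (hα ω).1) (hP2n ω)
        linarith
      have hx : 0 ≤ g11 ω * P1 ω := mul_nonneg (hn11 ω) (hP1n ω)
      have hq : g11 ω * P1 ω / (1 + g12 ω * α ω * P2 ω) ≤ g11 ω * P1 ω :=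
        div_le_self hx hd
      have hpos : 0 < 1 + g11 ω * P1 ω / (1 + g12 ω * α ω * P2 ω) := by
        have : 0 ≤ g11 ω * P1 ω / (1 + g12 ω * α ω * P2 ω) :=
          div_nonneg hx (by linarith)
        linarith
      exact Real.log_le_log hpos (by linarith)
    calc min (S1 μ g11 g12 g22 P1 P2 α) (S2 μ g11 g12 g22 P1 P2 α)
        ≤ S1 μ g11 g12 g22 P1 P2 α := min_le_left _ _
      _ ≤ (∫ ω, Real.log (1 + g11 ω * P1 ω) ∂μ) +
          ∫ ω, Real.log (1 + g22 ω * P2 ω) ∂μ := add_le_add hA le_rfl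
      _ ≤ _ := add_le_add
          (hmax1 P1 hP1m hP1n hP1I hP1b hi5) (hmax2 P2 hP2m hP2n hP2I hP2b hi2)
  · rw [min_eq_left hEVS, hS1eq]
end
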